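/- arXiv:1403.7286 — 5 statements merged into one kernel-verified Lean document; each statement's English description precedes it below -/
import Mathlib

section
/- Let a > 0, b₁ > b₂ > 0, c > 0, and suppose a − b₁r ≥ 0 and a + b₂r ≥ 0. Then the system q₁ = (a − b₁r)/(2(b₁+c)), q₂ = (a + b₂r)/(2(b₂+c)), r = (b₂q₂ − b₁q₁)/(b₁+b₂) has the unique solution r* = a·c·(b₂ − b₁) / [(b₁+b₂)(b₁b₂ + 2c²) + c(b₁² + b₂² + 4b₁b₂)], and this r* is strictly negative. -/
theorem interior_equilibrium_unique (a b1 b2 c : ℝ)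
    (ha : 0 < a) (hb : b2 < b1) (hb2 : 0 < b2) (hc : 0 < c) :
    (∀ q1 q2 r : ℝ, 0 ≤ a - b1 * r → 0 ≤ a + b2 * r →
      q1 = (a - b1 * r) / (2 * (b1 + c)) →
      q2 = (a + b2 * r) / (2 * (b2 + c)) →
      r = (b2 * q2 - b1 * q1) / (b1 + b2) →
      r = a * c * (b2 - b1)
        / ((b1 + b2) * (b1 * b2 + 2 * c ^ 2) + c * (b1 ^ 2 + b2 ^ 2 + 4 * b1 * b2))) ∧
    a * c * (b2 - b1)
        / ((b1 + b2) * (b1 * b2 + 2 * c ^ 2) + c * (b1 ^ 2 + b2 ^ 2 + 4 * b1 * b2)) < 0 := by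
  have hb1 : 0 < b1 := hb2.trans hb
  have hD : 0 < (b1 + b2) * (b1 * b2 + 2 * c ^ 2) + c * (b1 ^ 2 + b2 ^ 2 + 4 * b1 * b2) := by
    positivity
  constructor
  · intro q1 q2 r _ _ h1 h2 h3
    have e1 : (0:ℝ) < 2 * (b1 + c) := by positivity
    have e2 : (0:ℝ) < 2 * (b2 + c) := by positivity
    have e3 : (0:ℝ) < b1 + b2 := by positivity
    rw [h1, h2] at h3
    rw [eq_div_iff hD.ne']
    field_simp at h3
    nlinarith [h3, sq_nonneg r, mul_pos hb1 hb2]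
  · apply div_neg_of_neg_of_pos _ hD
    have h : b2 - b1 < 0 := by linarith
    have := mul_pos ha hc
    nlinarith [mul_pos (mul_pos ha hc) (sub_pos.mpr hb)]
end

section
/- Let a > 0, b₁ > b₂ > 0, c > 0, and define r* = a·c·(b₂ − b₁) / [(b₁+b₂)(b₁b₂ + 2c²) + c(b₁² + b₂² + 4b₁b₂)]. Then a − b₁r* ≥ 0 and a + b₂r* ≥ 0. -/
theorem interior_equilibrium_consistent (a b1 b2 c : ℝ)
    (ha : 0 < a) (hb : b2 < b1) (hb2 : 0 < b2) (hc : 0 < c) :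
    0 ≤ a - b1 * (a * c * (b2 - b1)
      / ((b1 + b2) * (b1 * b2 + 2 * c ^ 2) + c * (b1 ^ 2 + b2 ^ 2 + 4 * b1 * b2))) ∧
    0 ≤ a + b2 * (a * c * (b2 - b1)
      / ((b1 + b2) * (b1 * b2 + 2 * c ^ 2) + c * (b1 ^ 2 + b2 ^ 2 + 4 * b1 * b2))) := by
  have hb1 : 0 < b1 := hb2.trans hb
  set D : ℝ := (b1 + b2) * (b1 * b2 + 2 * c ^ 2) + c * (b1 ^ 2 + b2 ^ 2 + 4 * b1 * b2) with hDdef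
  have hD : 0 < D := by positivity
  set N : ℝ := a * c * (b2 - b1) with hNdef
  constructor
  · have h1 : a - b1 * (N / D) = (a * D - b1 * N) / D := by field_simp
    rw [h1]
    apply div_nonneg _ hD.le
    have hN : N ≤ 0 := mul_nonpos_of_nonneg_of_nonpos (by positivity) (by linarith)
    nlinarith [mul_pos ha hD, mul_nonneg hb1.le (neg_nonneg.2 hN)]
  · have h1 : a + b2 * (N / D) = (a * D + b2 * N) / D := by field_simp
    rw [h1]
    apply div_nonneg _ hD.le
    have : a * D + b2 * N = a * ((b1 + b2) * (b1 * b2 + 2 * c ^ 2) + c * (b1 ^ 2 + b2 ^ 2 + 4 * b1 * b2) + b2 * c * (b2 - b1)) := by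
      rw [hDdef, hNdef]; ring
    rw [this]
    have h2 : 0 ≤ (b1 + b2) * (b1 * b2 + 2 * c ^ 2) + c * (b1 ^ 2 + b2 ^ 2 + 4 * b1 * b2) + b2 * c * (b2 - b1) := by nlinarith
    nlinarith
end

section
/- Let a > 0, b₁ > b₂ > 0, c > 0. There is no solution (q₁, q₂, r) with q₁ = 0, q₂ = (a + b₂r)/(2(b₂+c)) ≥ 0, r = (b₂q₂ − b₁q₁)/(b₁+b₂) satisfying a − b₁r < 0; explicitly, these equations force r = a·b₂ / (2(b₁+b₂)(b₂+c) − b₂²), for which a − b₁r ≥ 0. -/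
theorem case_elimination_q1_zero (a b1 b2 c : ℝ)
    (ha : 0 < a) (hb : b2 < b1) (hb2 : 0 < b2) (hc : 0 < c) :
    ∀ q1 q2 r : ℝ, q1 = 0 →
      q2 = (a + b2 * r) / (2 * (b2 + c)) → 0 ≤ q2 →
      r = (b2 * q2 - b1 * q1) / (b1 + b2) →
      r = a * b2 / (2 * (b1 + b2) * (b2 + c) - b2 ^ 2) ∧ 0 ≤ a - b1 * r := by
  intro q1 q2 r h1 h2 hq2 h3
  subst h1 h2
  have hbc : (0:ℝ) < b2 + c := by linarith
  have hb12 : (0:ℝ) < b1 + b2 := by linarith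
  have hD : (0:ℝ) < 2 * (b1 + b2) * (b2 + c) - b2 ^ 2 := by nlinarith
  have hr : r = a * b2 / (2 * (b1 + b2) * (b2 + c) - b2 ^ 2) := by
    field_simp at h3
    field_simp
    nlinarith [h3]
  refine ⟨hr, ?_⟩
  rw [hr]
  have : a - b1 * (a * b2 / (2 * (b1 + b2) * (b2 + c) - b2 ^ 2)) =
      a * (b1 * b2 + 2 * b1 * c + b2 ^ 2 + 2 * b2 * c) / (2 * (b1 + b2) * (b2 + c) - b2 ^ 2) := by
    field_simp; ring
  rw [this]
  apply div_nonneg (by nlinarith [mul_pos hb2 hc, mul_pos (hb2.trans hb) hc, mul_pos (hb2.trans hb) hb2]) (le_of_lt hD)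
end

section
/- Let a > 0, b₁ > b₂ > 0 with b₁ ≤ 3b₂, c > 0, and f ≥ a/(b₂ + 2c). Define r* = q₂* = a/(b₂ + 2c) and q₁* = (a − b₁r*)/(2(b₁+c)) if b₁ < b₂ + 2c, else q₁* = 0. Then (q₁*, q₂*, r*) is a generalized Nash equilibrium of the two-node Cournot game with consumer-surplus-maximizing market maker: q₂* maximizes q₂·(a − b₂(q₂ − r*)) − c·q₂² over q₂ ≥ 0, q₁* maximizes q₁·(a − b₁(q₁ + r*)) − c·q₁² over q₁ ≥ 0, and r* maximizes Π(r) = b₁(q₁* + r)² + b₂(q₂* − r)² over r ∈ [−q₁*, q₂*] ∩ [−f, f]. -/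
theorem consumer_surplus_gne_exists (a b1 b2 c f : ℝ)
    (ha : 0 < a) (hb : b2 < b1) (hb2 : 0 < b2) (hb13 : b1 ≤ 3 * b2) (hc : 0 < c)
    (hf : a / (b2 + 2 * c) ≤ f) :
    let r := a / (b2 + 2 * c)
    let q2s := a / (b2 + 2 * c)
    let q1s := if b1 < b2 + 2 * c then (a - b1 * r) / (2 * (b1 + c)) else 0
    (∀ q2 : ℝ, 0 ≤ q2 →
      q2 * (a - b2 * (q2 - r)) - c * q2 ^ 2
        ≤ q2s * (a - b2 * (q2s - r)) - c * q2s ^ 2) ∧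
    (∀ q1 : ℝ, 0 ≤ q1 →
      q1 * (a - b1 * (q1 + r)) - c * q1 ^ 2
        ≤ q1s * (a - b1 * (q1s + r)) - c * q1s ^ 2) ∧
    (∀ rr ∈ Set.Icc (-q1s) q2s ∩ Set.Icc (-f) f,
      b1 * (q1s + rr) ^ 2 + b2 * (q2s - rr) ^ 2
        ≤ b1 * (q1s + r) ^ 2 + b2 * (q2s - r) ^ 2) := by
  intro r q2s q1s
  have hs : 0 < b2 + 2 * c := by linarith
  have hr : r * (b2 + 2 * c) = a := div_mul_cancel₀ a (ne_of_gt hs)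
  have hrpos : 0 < r := div_pos ha hs
  have hq1s : 0 ≤ q1s := by
    show (0:ℝ) ≤ if b1 < b2 + 2 * c then (a - b1 * r) / (2 * (b1 + c)) else 0
    split_ifs with h
    · apply div_nonneg _ (by linarith)
      nlinarith
    · exact le_rfl
  refine ⟨?_, ?_, ?_⟩
  · intro q2 hq2
    have hq2s : q2s = r := rfl
    nlinarith [mul_nonneg (by linarith : (0:ℝ) ≤ b2 + c) (sq_nonneg (q2 - q2s)), hr]
  · intro q1 hq1
    show q1 * (a - b1 * (q1 + r)) - c * q1 ^ 2 ≤
      (if b1 < b2 + 2 * c then (a - b1 * r) / (2 * (b1 + c)) else 0) *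
        (a - b1 * ((if b1 < b2 + 2 * c then (a - b1 * r) / (2 * (b1 + c)) else 0) + r))
        - c * (if b1 < b2 + 2 * c then (a - b1 * r) / (2 * (b1 + c)) else 0) ^ 2
    split_ifs with h
    · have h2 : (2 * (b1 + c)) ≠ 0 := by nlinarith
      set k := (a - b1 * r) / (2 * (b1 + c)) with hk
      have hq : k * (2 * (b1 + c)) = a - b1 * r := div_mul_cancel₀ _ h2
      have key : k * (a - b1 * (k + r)) - c * k ^ 2
          - (q1 * (a - b1 * (q1 + r)) - c * q1 ^ 2) = (b1 + c) * (q1 - k) ^ 2 := by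
        linear_combination (q1 - k) * hq
      nlinarith [mul_nonneg (by linarith : (0:ℝ) ≤ b1 + c) (sq_nonneg (q1 - k)), key]
    · have h' : b2 + 2 * c ≤ b1 := le_of_not_gt h
      have : a ≤ b1 * r := by nlinarith
      nlinarith
  · rintro rr ⟨⟨h1, h2⟩, -⟩
    have hrq : r = q2s := rfl
    have hx0 : 0 ≤ q2s - rr := by linarith
    have hxQ : q2s - rr ≤ q1s + q2s := by linarith
    nlinarith [mul_nonneg (mul_nonneg (by linarith : (0:ℝ) ≤ b1 + b2) hx0) (by linarith : 0 ≤ (q1s + q2s) - (q2s - rr)),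
      mul_nonneg (mul_nonneg (by linarith : (0:ℝ) ≤ b1 - b2) (by linarith : 0 ≤ q1s + q2s)) hx0]
end

section
/- Let a > 0, b₁ > b₂ > 0, c > 0, and f < a/(b₂ + 2c). Then there is no generalized Nash equilibrium (q₁*, q₂*, r*) of the two-node consumer-surplus game with q₂* < f: if q₂* < f then the maximizer of Π(r) = b₁(q₁*+r)² + b₂(q₂*−r)² over r ∈ [−q₁*, q₂*] ∩ [−f, f] is r* = q₂*, and generator 2's first-order condition then forces q₂* = a/(b₂ + 2c) > f, a contradiction. -/
theorem no_gne_with_small_q2 (a b1 b2 c f : ℝ)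
    (ha : 0 < a) (hb : b2 < b1) (hb2 : 0 < b2) (hc : 0 < c)
    (hf : 0 ≤ f) (hfs : f < a / (b2 + 2 * c)) :
    ¬ ∃ q1s q2s rs : ℝ, 0 ≤ q1s ∧ 0 ≤ q2s ∧
      rs ∈ Set.Icc (-q1s) q2s ∩ Set.Icc (-f) f ∧
      (∀ q1 : ℝ, 0 ≤ q1 →
        q1 * (a - b1 * (q1 + rs)) - c * q1 ^ 2
          ≤ q1s * (a - b1 * (q1s + rs)) - c * q1s ^ 2) ∧
      (∀ q2 : ℝ, 0 ≤ q2 →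
        q2 * (a - b2 * (q2 - rs)) - c * q2 ^ 2
          ≤ q2s * (a - b2 * (q2s - rs)) - c * q2s ^ 2) ∧
      (∀ r ∈ Set.Icc (-q1s) q2s ∩ Set.Icc (-f) f,
        b1 * (q1s + r) ^ 2 + b2 * (q2s - r) ^ 2
          ≤ b1 * (q1s + rs) ^ 2 + b2 * (q2s - rs) ^ 2) ∧
      q2s < f := by
  rintro ⟨q1s, q2s, rs, hq1, hq2, ⟨⟨hr1, hr2⟩, ⟨hr3, hr4⟩⟩, hbr1, hbr2, hmax, hq2f⟩
  -- Step 1: rs = q2s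
  have hfeas : q2s ∈ Set.Icc (-q1s) q2s ∩ Set.Icc (-f) f :=
    ⟨⟨by linarith, le_refl _⟩, ⟨by linarith, le_of_lt hq2f⟩⟩
  have hPi := hmax q2s hfeas
  have hrs : rs = q2s := by
    by_contra hne
    have hlt : rs < q2s := lt_of_le_of_ne hr2 hne
    have hsum : 0 < q1s + q2s := by linarith
    have hbr : 0 < 2 * b1 * q1s + (b1 - b2) * q2s + (b1 + b2) * rs := by
      nlinarith [mul_pos (sub_pos.2 hb) hsum,
        mul_nonneg (by linarith : (0:ℝ) ≤ b1 + b2) (by linarith : 0 ≤ rs + q1s)]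
    nlinarith [mul_pos (sub_pos.2 hlt) hbr]
  subst hrs
  -- Step 2: generator 2's optimality forces q2s * (b2 + 2*c) = a
  set t : ℝ := (a + b2 * rs) / (2 * (b2 + c)) with ht_def
  have hbc : (0:ℝ) < 2 * (b2 + c) := by linarith
  have ht2 : 2 * (b2 + c) * t = a + b2 * rs := by
    rw [ht_def]; field_simp
  have htpos : 0 ≤ t := by
    apply div_nonneg _ (le_of_lt hbc)
    nlinarith
  have h2 := hbr2 t htpos
  have hsq : (rs - t) ^ 2 ≤ 0 := by nlinarith
  have hteq : t = rs := by nlinarith [sq_nonneg (rs - t)]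
  have hkey : rs * (b2 + 2 * c) = a := by
    rw [hteq] at ht2; linarith
  -- Step 3: contradiction with f < a / (b2 + 2*c)
  have hpos : (0:ℝ) < b2 + 2 * c := by linarith
  have : a / (b2 + 2 * c) = rs := by
    rw [div_eq_iff hpos.ne']; linarith
  linarith [hfs, hq2f, this]
end
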